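/- arXiv:1512.08691 — 2 statements merged into one kernel-verified Lean document; each statement's English description precedes it below -/
import Mathlib

section
/- (Mazur's lemma, pointwise version) Let X be a compact topological space and let (f_n) be a norm-bounded sequence in C(X) converging pointwise to a continuous function f ∈ C(X). Then there exists a sequence (g_n) with g_n ∈ conv({f_k : k ≥ n}) for each n such that (g_n) converges to f uniformly on X (i.e., in the supremum norm). -/
/-!
Subtracting `g`, we may assume `g = 0`, and it suffices to find elements of small norm in the
closed convex hulls `K p` of the tails `{f k : k ≥ n + p}`. Following Simons, choose `x p ∈ K p`
greedily so that `H (p + 1) = H p + 2⁻¹ ^ (p + 1) • x p` has almost minimal norm, and let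
`w = ∑ 2⁻¹ ^ (k + 1) • x k`. Then `w = H p + 2⁻¹ ^ p • t p` with `t p ∈ K p`, and comparing
`t p` with the greedy choice gives `2⁻¹ ^ p * (‖w‖ - δ) ≤ ‖w‖ - ‖H p‖`. Hence every norming
functional `φ` of `w` satisfies `‖w‖ - δ ≤ φ (t p)` for all `p`. For `φ = ± evaluation` at a
point where `|w|` is maximal, `φ (t p)` is small for large `p` since `f k → 0` pointwise.
-/

open Filter Topology Bornology Set Pointwise

lemma exists_forall_le_add_of_bddBelow {α : Type*} {K : Set α} (hK : K.Nonempty) {F : α → ℝ}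
    (hF : BddBelow (F '' K)) {η : ℝ} (hη : 0 < η) : ∃ x ∈ K, ∀ u ∈ K, F x ≤ F u + η := by
  obtain ⟨_, ⟨x, hxK, rfl⟩, hx⟩ :=
    exists_lt_of_csInf_lt (hK.image F) (lt_add_of_pos_right (sInf (F '' K)) hη)
  exact ⟨x, hxK, fun u hu => hx.le.trans (by gcongr; exact csInf_le hF (mem_image_of_mem F hu))⟩

lemma pow_mul_sub_le_sub_of_le_half_add {s : ℕ → ℝ} {S δ : ℝ} (hδ : 0 ≤ δ) (h0 : s 0 = 0)
    (hs : ∀ p, s (p + 1) ≤ (s p + S) / 2 + δ * 4⁻¹ ^ (p + 1)) (p : ℕ) :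
    2⁻¹ ^ p * (S - δ) ≤ S - s p := by
  suffices s p ≤ (1 - 2⁻¹ ^ p) * S + δ * (2⁻¹ ^ p - 4⁻¹ ^ p) by
    nlinarith [pow_nonneg (by norm_num : (0 : ℝ) ≤ 4⁻¹) p]
  induction p with
  | zero => simp [h0]
  | succ p ih =>
    have := hs p
    rw [pow_succ] at this ⊢
    rw [pow_succ]
    linarith

section NormedSpace

variable {E : Type*} [NormedAddCommGroup E] [NormedSpace ℝ E]

lemma exists_seq_norm_sum_range_succ_le (K : ℕ → Set E) (hK : ∀ p, (K p).Nonempty)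
    (a η : ℕ → ℝ) (hη : ∀ p, 0 < η p) :
    ∃ x : ℕ → E, (∀ p, x p ∈ K p) ∧ ∀ p, ∀ u ∈ K p,
      ‖∑ k ∈ Finset.range (p + 1), a k • x k‖ ≤
        ‖∑ k ∈ Finset.range p, a k • x k + a p • u‖ + η p := by
  choose ξ hξK hξ using fun (v : E) p =>
    exists_forall_le_add_of_bddBelow (hK p) (F := fun u => ‖v + a p • u‖)
      ⟨0, by rintro _ ⟨u, -, rfl⟩; positivity⟩ (hη p)
  let H : ℕ → E := fun p => Nat.rec 0 (fun p v => v + a p • ξ v p) p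
  have hH : ∀ p, H p = ∑ k ∈ Finset.range p, a k • ξ (H k) k := by
    intro p
    induction p with
    | zero => rfl
    | succ p ih => rw [Finset.sum_range_succ, ← ih]
  refine ⟨fun p => ξ (H p) p, fun p => hξK _ _, fun p u hu => ?_⟩
  rw [Finset.sum_range_succ, ← hH]
  exact hξ _ _ u hu

lemma Convex.tsum_mem {K : Set E} (hconv : Convex ℝ K) (hcl : IsClosed K)
    {a : ℕ → ℝ} (ha0 : ∀ k, 0 ≤ a k) (ha : HasSum a 1) {y : ℕ → E} (hy : ∀ k, y k ∈ K)
    (hsum : Summable fun k => a k • y k) :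
    ∑' k, a k • y k ∈ K := by
  set A : ℕ → ℝ := fun Q => ∑ k ∈ Finset.range Q, a k
  have hA : Tendsto A atTop (𝓝 1) := ha.tendsto_sum_nat
  have hlim : Tendsto (fun Q => (A Q)⁻¹ • ∑ k ∈ Finset.range Q, a k • y k) atTop
      (𝓝 (∑' k, a k • y k)) := by
    simpa using (hA.inv₀ one_ne_zero).smul hsum.hasSum.tendsto_sum_nat
  refine hcl.mem_of_tendsto hlim ?_
  filter_upwards [hA.eventually (eventually_gt_nhds one_pos)] with Q hQ
  rw [Finset.smul_sum]
  simp_rw [smul_smul]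
  refine hconv.sum_mem (fun k _ => mul_nonneg (inv_nonneg.2 hQ.le) (ha0 k)) ?_ (fun k _ => hy k)
  rw [← Finset.mul_sum, inv_mul_cancel₀ hQ.ne']

lemma hasSum_inv_two_pow_succ : HasSum (fun k : ℕ => (2 : ℝ)⁻¹ ^ (k + 1)) 1 := by
  simpa [pow_succ, div_eq_mul_inv, mul_comm] using hasSum_geometric_two' (1 : ℝ)

lemma summable_inv_two_pow_succ_smul [CompleteSpace E] {x : ℕ → E} (hx : IsBounded (range x)) :
    Summable fun k => (2 : ℝ)⁻¹ ^ (k + 1) • x k := by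
  obtain ⟨M, hM⟩ := isBounded_iff_forall_norm_le.1 hx
  refine hasSum_inv_two_pow_succ.summable.mul_right M |>.of_norm_bounded fun k => ?_
  rw [norm_smul, Real.norm_of_nonneg (by positivity)]
  gcongr
  exact hM _ (mem_range_self k)

lemma tsum_inv_two_pow_succ_smul_eq [CompleteSpace E] {x : ℕ → E} (hx : IsBounded (range x))
    (p : ℕ) :
    ∑' k, (2 : ℝ)⁻¹ ^ (k + 1) • x k = ∑ k ∈ Finset.range p, (2 : ℝ)⁻¹ ^ (k + 1) • x k +
      (2 : ℝ)⁻¹ ^ p • ∑' k, (2 : ℝ)⁻¹ ^ (k + 1) • x (k + p) := by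
  have hshift : IsBounded (range fun k => x (k + p)) :=
    hx.subset (range_subset_iff.2 fun k => mem_range_self _)
  rw [← (summable_inv_two_pow_succ_smul hx).sum_add_tsum_nat_add p,
    ← (summable_inv_two_pow_succ_smul hshift).tsum_const_smul]
  simp_rw [smul_smul, ← pow_add, add_right_comm _ p 1, add_comm p]

theorem exists_mem_forall_norm_sub_le_apply [CompleteSpace E] {K : ℕ → Set E}
    (hanti : Antitone K) (hne : ∀ p, (K p).Nonempty) (hconv : ∀ p, Convex ℝ (K p))
    (hcl : ∀ p, IsClosed (K p)) (hbdd : IsBounded (K 0)) {δ : ℝ} (hδ : 0 < δ) :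
    ∃ w ∈ K 0, ∃ t : ℕ → E, (∀ p, t p ∈ K p) ∧ ∀ φ : E →ₗ[ℝ] ℝ, (∀ v, φ v ≤ ‖v‖) →
      φ w = ‖w‖ → ∀ p, ‖w‖ - δ ≤ φ (t p) := by
  obtain ⟨x, hxK, hx⟩ := exists_seq_norm_sum_range_succ_le K hne (fun k => (2 : ℝ)⁻¹ ^ (k + 1))
    (fun p => δ * 4⁻¹ ^ (p + 1)) (fun p => by positivity)
  have hxbdd : IsBounded (range x) :=
    hbdd.subset (range_subset_iff.2 fun k => hanti (Nat.zero_le k) (hxK k))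
  set H : ℕ → E := fun p => ∑ k ∈ Finset.range p, (2 : ℝ)⁻¹ ^ (k + 1) • x k
  set t : ℕ → E := fun p => ∑' k, (2 : ℝ)⁻¹ ^ (k + 1) • x (k + p)
  set w := t 0
  have hw : ∀ p, w = H p + (2 : ℝ)⁻¹ ^ p • t p := by
    simpa only [w, t, H, add_zero] using tsum_inv_two_pow_succ_smul_eq hxbdd
  have htK : ∀ p, t p ∈ K p := fun p =>
    (hconv p).tsum_mem (hcl p) (fun k => by positivity) hasSum_inv_two_pow_succ
      (fun k => hanti (Nat.le_add_left p k) (hxK (k + p)))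
      (summable_inv_two_pow_succ_smul (hxbdd.subset (range_subset_iff.2 fun k => mem_range_self _)))
  refine ⟨w, htK 0, t, htK, fun φ hφ hφw p => ?_⟩
  have hmid : ∀ p, H p + (2 : ℝ)⁻¹ ^ (p + 1) • t p = (2 : ℝ)⁻¹ • (H p + w) := fun p => by
    rw [hw p, pow_succ']; module
  have hrec : ∀ p, ‖H (p + 1)‖ ≤ (‖H p‖ + ‖w‖) / 2 + δ * 4⁻¹ ^ (p + 1) := fun p =>
    calc ‖H (p + 1)‖ ≤ ‖H p + (2 : ℝ)⁻¹ ^ (p + 1) • t p‖ + δ * 4⁻¹ ^ (p + 1) := hx p _ (htK p)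
      _ = ‖(2 : ℝ)⁻¹ • (H p + w)‖ + δ * 4⁻¹ ^ (p + 1) := by rw [hmid]
      _ ≤ (‖H p‖ + ‖w‖) / 2 + δ * 4⁻¹ ^ (p + 1) := by
        rw [norm_smul, norm_inv, Real.norm_two]
        linarith [norm_add_le (H p) w]
  have hgap := pow_mul_sub_le_sub_of_le_half_add (s := fun p => ‖H p‖) hδ.le (by simp [H]) hrec p
  have hφH := hφ (H p)
  have hφsplit : φ w = φ (H p) + (2 : ℝ)⁻¹ ^ p * φ (t p) := by
    conv_lhs => rw [hw p]
    simp
  have : (2 : ℝ)⁻¹ ^ p * (‖w‖ - δ) ≤ (2 : ℝ)⁻¹ ^ p * φ (t p) := by linarith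
  exact le_of_mul_le_mul_left this (by positivity)

end NormedSpace

namespace ContinuousMap

variable {X : Type*} [TopologicalSpace X] [CompactSpace X]

lemma exists_mul_apply_eq_norm [Nonempty X] (w : C(X, ℝ)) :
    ∃ b : X, ∃ σ : ℝ, |σ| ≤ 1 ∧ σ * w b = ‖w‖ := by
  obtain ⟨b, -, hb⟩ := isCompact_univ.exists_isMaxOn univ_nonempty
    (continuous_abs.comp w.continuous).continuousOn
  have hwb : ‖w‖ = |w b| :=
    le_antisymm ((w.norm_le (abs_nonneg _)).2 fun y => hb (mem_univ y)) (w.norm_coe_le_norm b)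
  rcases le_total 0 (w b) with h | h
  · exact ⟨b, 1, by norm_num, by rw [hwb, abs_of_nonneg h, one_mul]⟩
  · exact ⟨b, -1, by norm_num, by rw [hwb, abs_of_nonpos h, neg_one_mul]⟩

theorem exists_mem_convexHull_norm_lt_of_tendsto_zero {f : ℕ → C(X, ℝ)}
    (hbdd : IsBounded (range f)) (h0 : ∀ x, Tendsto (fun k => f k x) atTop (𝓝 0))
    (n : ℕ) {ε : ℝ} (hε : 0 < ε) :
    ∃ v ∈ convexHull ℝ {u | ∃ k, n ≤ k ∧ u = f k}, ‖v‖ < ε := by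
  set K : ℕ → Set C(X, ℝ) := fun p => closure (convexHull ℝ {u | ∃ k, n + p ≤ k ∧ u = f k})
  have hanti : Antitone K := fun p q hpq => closure_mono <| convexHull_mono
    fun u ⟨k, hk, hu⟩ => ⟨k, by omega, hu⟩
  have hKbdd : IsBounded (K 0) := (isBounded_convexHull.2 <| hbdd.subset <| by
    rintro _ ⟨k, -, rfl⟩; exact mem_range_self k).closure
  obtain ⟨w, hwK, t, htK, ht⟩ := exists_mem_forall_norm_sub_le_apply hanti
    (fun p => ⟨f (n + p), subset_closure <| subset_convexHull ℝ _ ⟨n + p, le_rfl, rfl⟩⟩)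
    (fun p => (convex_convexHull ℝ _).closure) (fun p => isClosed_closure) hKbdd
    (by positivity : 0 < ε / 4)
  have hw : ‖w‖ ≤ ε / 2 := by
    rcases isEmpty_or_nonempty X with hX | hX
    · linarith [(w.norm_le le_rfl).2 isEmptyElim]
    obtain ⟨b, σ, hσ, hσw⟩ := w.exists_mul_apply_eq_norm
    let φ : C(X, ℝ) →L[ℝ] ℝ := σ • evalCLM ℝ b
    have hφ : ∀ v, φ v ≤ |v b| := fun v => calc
      φ v = σ * v b := rfl
      _ ≤ |σ| * |v b| := by rw [← abs_mul]; exact le_abs_self _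
      _ ≤ |v b| := mul_le_of_le_one_left (abs_nonneg _) hσ
    obtain ⟨N, hN⟩ := Metric.tendsto_atTop.1 (h0 b) (ε / 4) (by positivity)
    have htN : φ (t N) ≤ ε / 4 := by
      refine closure_minimal (convexHull_min ?_ (convex_halfSpace_le φ.isLinear _))
        (isClosed_le φ.continuous continuous_const) (htK N)
      rintro _ ⟨k, hk, rfl⟩
      have := hN k (by omega)
      rw [dist_zero_right, Real.norm_eq_abs] at this
      exact (hφ _).trans this.le
    have := ht φ (fun v => (hφ v).trans (v.norm_coe_le_norm b)) hσw N
    rw [ContinuousLinearMap.coe_coe] at this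
    linarith
  obtain ⟨v, hv, hvw⟩ := Metric.mem_closure_iff.1 hwK (ε / 4) (by positivity)
  refine ⟨v, by simpa using hv, ?_⟩
  calc ‖v‖ ≤ ‖w‖ + dist w v := by rw [dist_comm, dist_eq_norm]; exact norm_le_insert' v w
    _ < ε := by linarith

theorem exists_mem_convexHull_norm_sub_lt_of_tendsto {f : ℕ → C(X, ℝ)} {g : C(X, ℝ)}
    (hbdd : IsBounded (range f)) (hg : ∀ x, Tendsto (fun k => f k x) atTop (𝓝 (g x)))
    (n : ℕ) {ε : ℝ} (hε : 0 < ε) :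
    ∃ v ∈ convexHull ℝ {u | ∃ k, n ≤ k ∧ u = f k}, ‖v - g‖ < ε := by
  obtain ⟨v, hv, hvε⟩ := exists_mem_convexHull_norm_lt_of_tendsto_zero (f := fun k => f k - g)
    (by simpa [← range_comp, Function.comp_def] using hbdd.sub (isBounded_singleton (x := g)))
    (fun x => by simpa using (hg x).sub_const (g x)) n hε
  have htrans : {u | ∃ k, n ≤ k ∧ u = f k} = g +ᵥ {u | ∃ k, n ≤ k ∧ u = f k - g} := by
    ext u
    simp [mem_vadd_set, eq_comm]
  refine ⟨g + v, ?_, by simpa using hvε⟩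
  rw [htrans, convexHull_vadd]
  exact vadd_mem_vadd_set hv

end ContinuousMap

/-- Mazur's lemma (pointwise version): if a norm-bounded sequence `(f_n)` in
`C(X)` (`X` compact) converges pointwise to a continuous function `f`, then
there are `g_n ∈ conv{f_k : k ≥ n}` converging to `f` uniformly. -/
theorem mazur_lemma_pointwise {X : Type*} [TopologicalSpace X] [CompactSpace X]
    (f : ℕ → C(X, ℝ)) (g : C(X, ℝ))
    (hbdd : ∃ r : ℝ, ∀ n : ℕ, ∀ x : X, |f n x| ≤ r)
    (hconv : ∀ x : X, Tendsto (fun n => f n x) atTop (𝓝 (g x))) :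
    ∃ h : ℕ → C(X, ℝ),
      (∀ n, h n ∈ convexHull ℝ {u : C(X, ℝ) | ∃ k, n ≤ k ∧ u = f k}) ∧
      TendstoUniformly (fun n => ⇑(h n)) (⇑g) atTop := by
  obtain ⟨r, hr⟩ := hbdd
  have hfbdd : IsBounded (range f) := isBounded_iff_forall_norm_le.2 ⟨max r 0, by
    rintro _ ⟨k, rfl⟩
    exact ((f k).norm_le (le_max_right r 0)).2 fun x => (hr k x).trans (le_max_left r 0)⟩
  choose h hmem hnorm using fun n : ℕ =>
    ContinuousMap.exists_mem_convexHull_norm_sub_lt_of_tendsto hfbdd hconv n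
      (Nat.one_div_pos_of_nat (n := n))
  refine ⟨h, hmem, ?_⟩
  rw [← ContinuousMap.tendsto_iff_tendstoUniformly, tendsto_iff_norm_sub_tendsto_zero]
  exact squeeze_zero_norm (fun n => by simpa using (hnorm n).le)
    tendsto_one_div_add_atTop_nhds_zero_nat
end

section
/- Let U be a real normed space and let A ⊆ U be a bounded set whose weak closure is weakly compact. Then for every point x in the weak closure of A, there exists a sequence (x_n) of elements of A converging to x in the weak topology. -/
/-!
Let `x` lie in the weak closure of `A`. Choose `aₙ ∈ A` recursively so that `aₙ` is `1/(n+1)`-close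
to `x` on finitely many functionals which, up to a factor `2`, norm the finite-dimensional spaces
spanned by `x, a₀, …, aₘ` for all `m < n`. These functionals then converge along `(aₙ)` to their
value at `x`, and together they half-norm the span `Y` of `x` and the `aₙ`. A weak cluster point
`y` of `(aₙ)` lies in the norm closure of `Y` by Mazur's theorem and agrees with `x` on all those
functionals, so `y - x` vanishes on a half-norming family for `Y` while lying in its closure, hence
`y = x`. In the weakly compact weak closure of `A`, a sequence whose only cluster point is `x`
converges to `x`.
-/

open Filter Topology

section Norming

variable {𝕜 U : Type*} [RCLike 𝕜] [NormedAddCommGroup U] [NormedSpace 𝕜 U]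

/-- `D` is `1/2`-norming for `Y`, with the norm of each `y ∈ Y` witnessed by a single functional. -/
def IsHalfNorming (D : Set (StrongDual 𝕜 U)) (Y : Set U) : Prop :=
  ∀ y ∈ Y, ∃ f ∈ D, ‖f‖ ≤ 1 ∧ ‖y‖ ≤ 2 * ‖f y‖

theorem IsHalfNorming.mono_left {D D' : Set (StrongDual 𝕜 U)} {Y : Set U}
    (h : IsHalfNorming D Y) (hD : D ⊆ D') : IsHalfNorming D' Y := fun y hy =>
  let ⟨f, hf, hf1, hfy⟩ := h y hy
  ⟨f, hD hf, hf1, hfy⟩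

theorem isHalfNorming_iSup {ι : Type*} [Nonempty ι] {D : ι → Set (StrongDual 𝕜 U)}
    {E : ι → Submodule 𝕜 U} (hE : Directed (· ≤ ·) E) (h : ∀ i, IsHalfNorming (D i) (E i)) :
    IsHalfNorming (⋃ i, D i) (⨆ i, E i : Submodule 𝕜 U) := fun y hy =>
  let ⟨i, hi⟩ := (Submodule.mem_iSup_of_directed E hE).1 hy
  (h i).mono_left (Set.subset_iUnion D i) y hi

theorem exists_finset_isHalfNorming (E : Submodule 𝕜 U) [FiniteDimensional 𝕜 E] :
    ∃ F : Finset (StrongDual 𝕜 U), IsHalfNorming (F : Set (StrongDual 𝕜 U)) E := by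
  classical
  choose g hg1 hgz using fun z : E => exists_dual_vector'' 𝕜 (z : U)
  let O : E → Set E := fun z => {w | ‖w‖ < 2 * ‖g z w‖}
  have hO : ∀ z, IsOpen (O z) := fun z => isOpen_lt (by fun_prop) (by fun_prop)
  have hcover : Metric.sphere (0 : E) 1 ⊆ ⋃ z, O z := fun w hw => by
    refine Set.mem_iUnion.2 ⟨w, ?_⟩
    have hw1 : ‖(w : U)‖ = 1 := by simpa using hw
    simp [O, hgz, hw1]
  obtain ⟨t, ht⟩ := (isCompact_sphere (0 : E) 1).elim_finite_subcover O hO hcover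
  refine ⟨insert 0 (t.image g), fun y hy => ?_⟩
  rcases eq_or_ne y 0 with rfl | hy0
  · exact ⟨0, Finset.mem_insert_self _ _, by simp⟩
  set w : E := (‖y‖⁻¹ : 𝕜) • ⟨y, hy⟩
  have hyw : y = (‖y‖ : 𝕜) • (w : U) := by
    simp [w, smul_smul, hy0]
  have hw : w ∈ Metric.sphere (0 : E) 1 := by
    simp [w, norm_smul, hy0]
  obtain ⟨z, hzt, hwz⟩ := Set.mem_iUnion₂.1 (ht hw)
  refine ⟨g z, Finset.mem_insert_of_mem (Finset.mem_image_of_mem g hzt), hg1 z, ?_⟩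
  have hw1 : ‖(w : U)‖ = 1 := by simpa using hw
  have hwz' : 1 < 2 * ‖g z w‖ := by simpa [O, hw1] using hwz
  rw [hyw, map_smul, norm_smul, norm_smul, RCLike.norm_ofReal, abs_norm, hw1]
  nlinarith [norm_nonneg y]

theorem IsHalfNorming.eq_zero_of_mem_closure {D : Set (StrongDual 𝕜 U)} {Y : Set U}
    (hD : IsHalfNorming D Y) {z : U} (hz : z ∈ closure Y) (hDz : ∀ f ∈ D, f z = 0) : z = 0 := by
  refine norm_le_zero_iff.1 (le_of_forall_pos_le_add fun ε hε => ?_)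
  obtain ⟨w, hwY, hwz⟩ := Metric.mem_closure_iff.1 hz (ε / 3) (by positivity)
  obtain ⟨f, hfD, hf1, hfw⟩ := hD w hwY
  have hfw_le : ‖f w‖ ≤ ε / 3 := calc
    ‖f w‖ = ‖f (w - z)‖ := by rw [map_sub, hDz f hfD, sub_zero]
    _ ≤ ‖f‖ * ‖w - z‖ := f.le_opNorm _
    _ ≤ 1 * dist z w := by rw [dist_comm, dist_eq_norm]; gcongr
    _ ≤ ε / 3 := by rw [one_mul]; exact hwz.le
  calc ‖z‖ ≤ dist z w + ‖w‖ := by simpa [dist_eq_norm] using norm_le_norm_sub_add z w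
    _ ≤ 0 + ε := by linarith

end Norming

section WeakTopology

variable {𝕜 U : Type*} [RCLike 𝕜] [NormedAddCommGroup U] [NormedSpace 𝕜 U]

theorem continuous_apply_toWeakSpace_symm (f : StrongDual 𝕜 U) :
    Continuous fun v : WeakSpace 𝕜 U => f ((toWeakSpace 𝕜 U).symm v) :=
  WeakBilin.eval_continuous (topDualPairing 𝕜 U).flip f

theorem exists_mem_forall_norm_sub_lt_of_mem_weak_closure {A : Set U} {x : U}
    (hx : toWeakSpace 𝕜 U x ∈ closure (toWeakSpace 𝕜 U '' A)) (G : Finset (StrongDual 𝕜 U))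
    {ε : ℝ} (hε : 0 < ε) : ∃ a ∈ A, ∀ f ∈ G, ‖f a - f x‖ < ε := by
  have hnhds : ∀ᶠ v in 𝓝 (toWeakSpace 𝕜 U x), ∀ f ∈ G,
      f ((toWeakSpace 𝕜 U).symm v) ∈ Metric.ball (f x) ε :=
    G.eventually_all.2 fun f _ => by
      have hf := (continuous_apply_toWeakSpace_symm f).tendsto (toWeakSpace 𝕜 U x)
      rw [LinearEquiv.symm_apply_apply] at hf
      exact hf.eventually (Metric.ball_mem_nhds (f x) hε)
  obtain ⟨_, hv, a, haA, rfl⟩ := mem_closure_iff_nhds.1 hx _ hnhds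
  exact ⟨a, haA, fun f hf => by simpa [dist_eq_norm] using hv f hf⟩

theorem apply_eq_of_mapClusterPt_toWeakSpace {ι : Type*} {l : Filter ι} {a : ι → U} {x y : U}
    {f : StrongDual 𝕜 U} (hf : Tendsto (fun i => f (a i)) l (𝓝 (f x)))
    (hy : MapClusterPt (toWeakSpace 𝕜 U y) l (toWeakSpace 𝕜 U ∘ a)) : f y = f x := by
  have := hy.continuousAt_comp (continuous_apply_toWeakSpace_symm f).continuousAt
  exact eq_of_nhds_neBot (this.clusterPt.mono hf)

theorem mem_closure_of_mapClusterPt_toWeakSpace [NormedSpace ℝ U] [IsScalarTower ℝ 𝕜 U]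
    {ι : Type*} {l : Filter ι} {s : Set U} (hs : Convex ℝ s) {a : ι → U} (ha : ∀ i, a i ∈ s)
    {y : U} (hy : MapClusterPt (toWeakSpace 𝕜 U y) l (toWeakSpace 𝕜 U ∘ a)) : y ∈ closure s := by
  have hy' : toWeakSpace 𝕜 U y ∈ closure (toWeakSpace 𝕜 U '' s) :=
    hy.clusterPt.mem_closure_of_mem _ (mem_map.2 (Eventually.of_forall fun i => ⟨a i, ha i, rfl⟩))
  rw [← hs.toWeakSpace_closure 𝕜] at hy'
  exact (toWeakSpace 𝕜 U).injective.mem_set_image.1 hy'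

theorem exists_seq_tendsto_on_isHalfNorming {A : Set U} {x : U}
    (hx : toWeakSpace 𝕜 U x ∈ closure (toWeakSpace 𝕜 U '' A)) :
    ∃ a : ℕ → U, (∀ n, a n ∈ A) ∧ ∃ (Y : Submodule 𝕜 U) (D : Set (StrongDual 𝕜 U)),
      x ∈ Y ∧ (∀ n, a n ∈ Y) ∧ IsHalfNorming D Y ∧
        ∀ f ∈ D, Tendsto (fun n => f (a n)) atTop (𝓝 (f x)) := by
  classical
  choose N hN using fun T : Finset U =>
    exists_finset_isHalfNorming (Submodule.span 𝕜 ((insert x T : Finset U) : Set U))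
  -- `Φ T` collects the norming sets of all subsets of `T`, so that `Φ` is monotone.
  let Φ : Finset U → Finset (StrongDual 𝕜 U) := fun T => T.powerset.biUnion N
  choose pick hpickA hpick using fun (G : Finset (StrongDual 𝕜 U)) (n : ℕ) =>
    exists_mem_forall_norm_sub_lt_of_mem_weak_closure hx G (Nat.one_div_pos_of_nat (n := n))
  let T : ℕ → Finset U := fun n => Nat.rec ∅ (fun n T => insert (pick (Φ T) n) T) n
  let a : ℕ → U := fun n => pick (Φ (T n)) n
  have hT : Monotone T := monotone_nat_of_le_succ fun n => Finset.subset_insert _ _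
  have hΦT : Monotone (Φ ∘ T) := fun m n hmn =>
    Finset.biUnion_subset_biUnion_of_subset_left _ (Finset.powerset_mono.2 (hT hmn))
  let E : ℕ → Submodule 𝕜 U := fun n => Submodule.span 𝕜 ((insert x (T n) : Finset U) : Set U)
  have hE : Monotone E := fun m n hmn =>
    Submodule.span_mono (Finset.coe_subset.2 (Finset.insert_subset_insert x (hT hmn)))
  refine ⟨a, fun n => hpickA _ n, ⨆ n, E n, ⋃ n, (Φ (T n) : Set (StrongDual 𝕜 U)),
    ?_, fun n => ?_, ?_, ?_⟩
  · exact Submodule.mem_iSup_of_mem 0 (Submodule.subset_span (Finset.mem_insert_self x _))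
  · exact Submodule.mem_iSup_of_mem (n + 1) (Submodule.subset_span
      (Finset.mem_insert_of_mem (Finset.mem_insert_self _ _)))
  · refine isHalfNorming_iSup hE.directed_le fun n => (hN (T n)).mono_left ?_
    exact Finset.coe_subset.2 (Finset.subset_biUnion_of_mem N (Finset.mem_powerset_self _))
  · rintro f ⟨_, ⟨m, rfl⟩, hf⟩
    rw [tendsto_iff_norm_sub_tendsto_zero]
    refine squeeze_zero' (Eventually.of_forall fun n => norm_nonneg _) ?_
      tendsto_one_div_add_atTop_nhds_zero_nat
    filter_upwards [eventually_ge_atTop m] with n hmn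
    exact (hpick _ n f (hΦT hmn hf)).le

end WeakTopology

theorem weak_closure_point_is_weak_seq_limit_general
    (U : Type*) [NormedAddCommGroup U] [NormedSpace ℝ U] (A : Set U)
    (hcomp : IsCompact (closure (toWeakSpace ℝ U '' A))) :
    ∀ x ∈ closure (toWeakSpace ℝ U '' A),
      ∃ u : ℕ → U, (∀ n, u n ∈ A) ∧
        Tendsto (fun n => toWeakSpace ℝ U (u n)) atTop (𝓝 x) := by
  intro x hx
  obtain ⟨x, rfl⟩ := (toWeakSpace ℝ U).surjective x
  obtain ⟨a, haA, Y, D, hxY, haY, hD, hlim⟩ := exists_seq_tendsto_on_isHalfNorming hx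
  refine ⟨a, haA, hcomp.tendsto_nhds_of_unique_mapClusterPt
    (Eventually.of_forall fun n => subset_closure ⟨a n, haA n, rfl⟩) fun y _ hy => ?_⟩
  obtain ⟨y, rfl⟩ := (toWeakSpace ℝ U).surjective y
  have hyY : y ∈ closure (Y : Set U) := mem_closure_of_mapClusterPt_toWeakSpace Y.convex haY hy
  have hyx : y - x ∈ closure (Y : Set U) := by
    rw [← Y.topologicalClosure_coe] at hyY ⊢
    exact Y.topologicalClosure.sub_mem hyY (Y.le_topologicalClosure hxY)
  have hDyx : ∀ f ∈ D, f (y - x) = 0 := fun f hf => by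
    rw [map_sub, apply_eq_of_mapClusterPt_toWeakSpace (hlim f hf) hy, sub_self]
  rw [sub_eq_zero.1 (hD.eq_zero_of_mem_closure hyx hDyx)]

/-- Angelicity for the weak topology of a normed space: if `A` is a bounded
subset of a normed space `U` whose weak closure is weakly compact, then every
point of the weak closure of `A` is the weak limit of a sequence from `A`. -/
theorem weak_closure_point_is_weak_seq_limit
    (U : Type*) [NormedAddCommGroup U] [NormedSpace ℝ U] (A : Set U)
    (hbdd : ∃ r : ℝ, ∀ a ∈ A, ‖a‖ ≤ r)
    (hcomp : IsCompact (closure (toWeakSpace ℝ U '' A))) :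
    ∀ x ∈ closure (toWeakSpace ℝ U '' A),
      ∃ u : ℕ → U, (∀ n, u n ∈ A) ∧
        Tendsto (fun n => toWeakSpace ℝ U (u n)) atTop (𝓝 x) :=
  weak_closure_point_is_weak_seq_limit_general U A hcomp
end
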